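/- Let A be a unital Banach algebra and x ∈ A accretive. The following are equivalent: (i) xA is norm closed; (ii) Ax is norm closed; (iii) x is pseudo-invertible in A (there is y ∈ A with xyx = x); (iv) x is invertible in the closed subalgebra generated by x. Moreover these imply 0 is isolated in or absent from the spectrum of x. -/

import Mathlib

/-!
For `t > 0` the lower bound `t ‖w‖ ≤ ‖(t + x) w‖`, which accretivity gives because
`c ↦ ψ (c w) / ‖w‖` is a state whenever `ψ` norms `w`, makes `t + x` invertible in the
closed unital algebra `D` generated by `x`, with `‖(t + x)⁻¹‖ ≤ 1 / t`. So `e t = x (t + x)⁻¹`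
satisfies `‖e t‖ ≤ 2` and the resolvent identity `e s - e t = (t - s) (s + x)⁻¹ e t`. If `x A`
(or `A x`) is closed, the open mapping theorem writes `e t = x c` (or `c x`) with `c` bounded,
so `(s + x)⁻¹ e t` is uniformly bounded and `t ↦ e t` is Lipschitz. Its limit at `0⁺` is an
idempotent `u ∈ D` with `x u = x`, lying in every closed set that contains all `e t`; in
particular in `x A` (giving `x y x = x`) and in the closed non-unital algebra `B` generated by
`x`. As `u (t + x)⁻¹` stays bounded, `(x + 1 - u) (u (t + x)⁻¹ + 1 - u) = 1 - t u (t + x)⁻¹`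
is invertible for small `t`; hence `x + 1 - u` is a unit of `D`, and `u (x + 1 - u)⁻¹ ∈ B`
inverts `x` relative to `u`. Finally `σ x ⊆ {0} ∪ σ (x + 1 - u)` and `0 ∉ σ (x + 1 - u)`.
-/

open Filter Topology Set

theorem ContinuousLinearMap.exists_preimage_norm_le_of_isClosed_range
    {𝕜 E F : Type*} [NontriviallyNormedField 𝕜] [NormedAddCommGroup E] [NormedSpace 𝕜 E]
    [CompleteSpace E] [NormedAddCommGroup F] [NormedSpace 𝕜 F] [CompleteSpace F]
    (f : E →L[𝕜] F) (hf : IsClosed (range f)) :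
    ∃ C > 0, ∀ y ∈ range f, ∃ x, f x = y ∧ ‖x‖ ≤ C * ‖y‖ := by
  have : IsClosed (LinearMap.range (f : E →ₗ[𝕜] F) : Set F) := by
    rwa [LinearMap.coe_range, ContinuousLinearMap.coe_coe]
  have : CompleteSpace (LinearMap.range (f : E →ₗ[𝕜] F)) := this.completeSpace_coe
  obtain ⟨C, hC, h⟩ :=
    f.rangeRestrict.exists_preimage_norm_le (LinearMap.surjective_rangeRestrict _)
  refine ⟨C, hC, fun y hy => ?_⟩
  obtain ⟨x, hx, hxn⟩ := h ⟨y, hy⟩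
  exact ⟨x, congrArg Subtype.val hx, hxn⟩

section Regular

variable {R : Type*} [Ring R] [TopologicalSpace R] [IsTopologicalRing R] [T2Space R] {x y : R}

theorem isClosed_setOf_exists_eq_mul_left_of_mul_mul_eq (h : x * y * x = x) :
    IsClosed {w : R | ∃ a : R, w = x * a} := by
  have : {w : R | ∃ a : R, w = x * a} = {w | x * y * w = w} := by
    ext w
    refine ⟨?_, fun hw => ⟨y * w, by rw [← mul_assoc, hw]⟩⟩
    rintro ⟨a, rfl⟩
    show x * y * (x * a) = x * a
    rw [← mul_assoc, h]
  rw [this]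
  exact isClosed_eq (continuous_const_mul _) continuous_id

theorem isClosed_setOf_exists_eq_mul_right_of_mul_mul_eq (h : x * y * x = x) :
    IsClosed {w : R | ∃ a : R, w = a * x} := by
  have : {w : R | ∃ a : R, w = a * x} = {w | w * (y * x) = w} := by
    ext w
    refine ⟨?_, fun hw => ⟨w * y, by rw [mul_assoc, hw]⟩⟩
    rintro ⟨a, rfl⟩
    show a * x * (y * x) = a * x
    rw [mul_assoc, ← mul_assoc x, h]
  rw [this]
  exact isClosed_eq (continuous_mul_const _) continuous_id

end Regular

section Idempotent

variable {k R : Type*} [Field k] [CommRing R] [Algebra k R] {a u : R}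

theorem spectrum_subset_insert_zero_add_one_sub (hu : IsIdempotentElem u) (hau : a * u = a) :
    spectrum k a ⊆ insert 0 (spectrum k (a + (1 - u))) := by
  intro z hz
  by_contra h
  obtain ⟨hz0, hz'⟩ : z ≠ 0 ∧ z ∉ spectrum k (a + (1 - u)) := by simpa [not_or] using h
  obtain ⟨v, hv⟩ := (spectrum.notMem_iff.mp hz').exists_right_inv
  refine spectrum.notMem_iff.mpr (IsUnit.of_mul_eq_one
    (v * u + algebraMap k R z⁻¹ * (1 - u)) ?_) hz
  have hzz : algebraMap k R z * algebraMap k R z⁻¹ = 1 := by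
    rw [← map_mul, mul_inv_cancel₀ hz0, map_one]
  linear_combination u * hv + (1 - u) * hzz - v * hu.eq + algebraMap k R z⁻¹ * hau

theorem mul_mul_eq_of_add_one_sub_mul_eq_one {v : R} (hu : IsIdempotentElem u)
    (hv : (a + (1 - u)) * v = 1) : a * (u * v) = u := by
  linear_combination u * hv + v * hu.eq

end Idempotent

section Elemental

variable {R A : Type*} [CommSemiring R] [Semiring A] [Algebra R A] [TopologicalSpace A]
  [IsTopologicalSemiring A] [ContinuousConstSMul R A] {x : A}

theorem mul_mem_nonUnitalElemental {d b : A} (hd : d ∈ Algebra.elemental R x)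
    (hb : b ∈ NonUnitalAlgebra.elemental R x) : d * b ∈ NonUnitalAlgebra.elemental R x := by
  have key : ∀ d ∈ Algebra.adjoin R {x}, ∀ b ∈ NonUnitalAlgebra.adjoin R {x},
      d * b ∈ NonUnitalAlgebra.adjoin R {x} := by
    intro d hd
    induction hd using Algebra.adjoin_induction with
    | mem y hy =>
      rw [mem_singleton_iff.mp hy]
      exact fun b hb => mul_mem (NonUnitalAlgebra.self_mem_adjoin_singleton R x) hb
    | algebraMap r => exact fun b hb => by rw [← Algebra.smul_def]; exact SMulMemClass.smul_mem r hb
    | add d e _ _ hd he => exact fun b hb => by rw [add_mul]; exact add_mem (hd b hb) (he b hb)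
    | mul d e _ _ hd he => exact fun b hb => by rw [mul_assoc]; exact hd _ (he b hb)
  exact map_mem_closure₂ continuous_mul hd hb key

theorem nonUnitalElemental_le_elemental :
    NonUnitalAlgebra.elemental R x ≤ (Algebra.elemental R x).toNonUnitalSubalgebra :=
  NonUnitalAlgebra.elemental.le_of_mem (Algebra.elemental.isClosed R x)
    (Algebra.elemental.self_mem R x)

theorem mul_eq_self_of_mem_nonUnitalElemental [T2Space A] {u b : A} (hux : u * x = x)
    (hb : b ∈ NonUnitalAlgebra.elemental R x) : u * b = b := by
  have key : ∀ b ∈ NonUnitalAlgebra.adjoin R {x}, u * b = b := by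
    intro b hb
    induction hb using NonUnitalAlgebra.adjoin_induction with
    | mem y hy => rwa [mem_singleton_iff.mp hy]
    | add b c _ _ hb hc => rw [mul_add, hb, hc]
    | zero => rw [mul_zero]
    | mul b c _ _ hb _ => rw [← mul_assoc, hb]
    | smul r b _ hb => rw [mul_smul_comm, hb]
  exact closure_minimal key (isClosed_eq (continuous_const_mul u) continuous_id) hb

end Elemental

/-- Left multiplication by `a` is an accretive operator on `R` in the Banach-space sense. -/
def IsLeftAccretive {R : Type*} [NormedRing R] [NormedAlgebra ℂ R] (a : R) : Prop :=
  ∀ t : ℝ, 0 < t → ∀ w : R, t * ‖w‖ ≤ ‖(algebraMap ℂ R t + a) * w‖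

noncomputable def approxUnit {R : Type*} [Ring R] [Algebra ℂ R] (a : R) (t : ℝ) : R :=
  a * Ring.inverse (algebraMap ℂ R t + a)

section Resolvent

variable {R : Type*} [NormedRing R] [NormedAlgebra ℂ R] [NormOneClass R] [CompleteSpace R]
  {a : R}

theorem IsLeftAccretive.isUnit_algebraMap_add (ha : IsLeftAccretive a) {t : ℝ}
    (ht : 0 < t) : IsUnit (algebraMap ℂ R t + a) := by
  have : Nontrivial R := NormOneClass.nontrivial
  -- `-s` lies outside the spectrum, and `‖(s + a)⁻¹‖ ≤ 1 / s` lets one perturbation reach `t`.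
  set s := ‖a‖ + t
  have hs : 0 < s := by positivity
  obtain ⟨b, hb⟩ : IsUnit (algebraMap ℂ R s + a) := by
    have hσ : (-s : ℂ) ∉ spectrum ℂ a := fun h => by
      have := spectrum.norm_le_norm_of_mem h
      rw [norm_neg, Complex.norm_real, Real.norm_of_nonneg hs.le] at this
      linarith
    simpa [sub_eq_add_neg, add_comm] using (spectrum.notMem_iff.mp hσ).neg
  have hb_inv : s * ‖(↑b⁻¹ : R)‖ ≤ 1 := by
    simpa [← hb] using ha s hs ↑b⁻¹
  have hlt : ‖(algebraMap ℂ R t + a) - b‖ < ‖(↑b⁻¹ : R)‖⁻¹ := by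
    rw [hb, add_sub_add_right_eq_sub, ← map_sub, norm_algebraMap', ← Complex.ofReal_sub,
      Complex.norm_real, Real.norm_eq_abs, abs_sub_comm, abs_of_nonneg (by simp [s])]
    calc s - t < s := by linarith
      _ ≤ ‖(↑b⁻¹ : R)‖⁻¹ := by
        rw [le_inv_comm₀ hs (Units.norm_pos _), ← mul_one s⁻¹, le_inv_mul_iff₀ hs]
        exact hb_inv
  exact (b.ofNearby _ hlt).isUnit

end Resolvent

section CommBanachAlgebra

variable {R : Type*} [NormedCommRing R] [NormedAlgebra ℂ R] {a u : R} {τ : ℕ → ℝ}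

theorem isIdempotentElem_of_tendsto_approxUnit (hau : a * u = a)
    (hu : Tendsto (fun n => approxUnit a (τ n)) atTop (𝓝 u)) : IsIdempotentElem u :=
  tendsto_nhds_unique (hu.const_mul u) <| hu.congr fun n => by
    rw [approxUnit, ← mul_assoc, mul_comm u a, hau]

variable [CompleteSpace R]

theorem exists_forall_le_norm_of_isUnit_add_one_sub (hu : IsIdempotentElem u)
    (hau : a * u = a) (hunit : IsUnit (a + (1 - u))) :
    ∃ ε > 0, ∀ z ∈ spectrum ℂ a, z ≠ 0 → ε ≤ ‖z‖ := by
  have h0 : (0 : ℂ) ∈ (spectrum ℂ (a + (1 - u)))ᶜ := (spectrum.zero_notMem_iff ℂ).mpr hunit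
  obtain ⟨ε, hε, hball⟩ := Metric.isOpen_iff.mp (spectrum.isClosed _).isOpen_compl 0 h0
  refine ⟨ε, hε, fun z hz hz0 => le_of_not_gt fun hlt => ?_⟩
  rcases spectrum_subset_insert_zero_add_one_sub hu hau hz with rfl | h
  · exact hz0 rfl
  · exact hball (mem_ball_zero_iff.mpr hlt) h

variable [NormOneClass R]

namespace IsLeftAccretive

theorem mul_inverse (ha : IsLeftAccretive a) {t : ℝ} (ht : 0 < t) :
    (algebraMap ℂ R t + a) * Ring.inverse (algebraMap ℂ R t + a) = 1 :=
  Ring.mul_inverse_cancel _ (ha.isUnit_algebraMap_add ht)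

theorem norm_algebraMap_mul_inverse_le (ha : IsLeftAccretive a) {t : ℝ} (ht : 0 < t) :
    ‖algebraMap ℂ R t * Ring.inverse (algebraMap ℂ R t + a)‖ ≤ 1 := by
  rw [← Algebra.smul_def, norm_smul, Complex.norm_real, Real.norm_of_nonneg ht.le]
  simpa [ha.mul_inverse ht] using ha t ht (Ring.inverse (algebraMap ℂ R t + a))

theorem approxUnit_eq (ha : IsLeftAccretive a) {t : ℝ} (ht : 0 < t) :
    approxUnit a t = 1 - algebraMap ℂ R t * Ring.inverse (algebraMap ℂ R t + a) := by
  rw [approxUnit]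
  linear_combination ha.mul_inverse ht

theorem norm_approxUnit_le (ha : IsLeftAccretive a) {t : ℝ} (ht : 0 < t) :
    ‖approxUnit a t‖ ≤ 2 := by
  rw [ha.approxUnit_eq ht]
  calc _ ≤ ‖(1 : R)‖ + ‖algebraMap ℂ R t * Ring.inverse (algebraMap ℂ R t + a)‖ := norm_sub_le _ _
    _ ≤ 1 + 1 := by rw [norm_one]; gcongr; exact ha.norm_algebraMap_mul_inverse_le ht
    _ = 2 := by norm_num

theorem approxUnit_sub_approxUnit (ha : IsLeftAccretive a) {s t : ℝ} (hs : 0 < s) (ht : 0 < t) :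
    approxUnit a s - approxUnit a t =
      algebraMap ℂ R ((t - s : ℝ) : ℂ) *
        (Ring.inverse (algebraMap ℂ R s + a) * approxUnit a t) := by
  rw [approxUnit, approxUnit, Complex.ofReal_sub, map_sub]
  linear_combination (a * Ring.inverse (algebraMap ℂ R t + a)) * ha.mul_inverse hs -
    (a * Ring.inverse (algebraMap ℂ R s + a)) * ha.mul_inverse ht

theorem lipschitzOnWith_approxUnit (ha : IsLeftAccretive a) {K : NNReal}
    (hK : ∀ s t : ℝ, 0 < s → 0 < t →
      ‖Ring.inverse (algebraMap ℂ R s + a) * approxUnit a t‖ ≤ K) :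
    LipschitzOnWith K (approxUnit a) (Ioi 0) := by
  refine LipschitzOnWith.of_dist_le_mul fun s hs t ht => ?_
  rw [dist_eq_norm, ha.approxUnit_sub_approxUnit hs ht, ← Algebra.smul_def, norm_smul,
    Complex.norm_real, Real.dist_eq, abs_sub_comm, mul_comm]
  exact mul_le_mul_of_nonneg_right (hK s t hs ht) (norm_nonneg _)

theorem mul_eq_of_tendsto_approxUnit (ha : IsLeftAccretive a) (hτ : ∀ n, 0 < τ n)
    (hτ0 : Tendsto τ atTop (𝓝 0)) (hu : Tendsto (fun n => approxUnit a (τ n)) atTop (𝓝 u)) :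
    a * u = a := by
  have key : ∀ n, a * approxUnit a (τ n) = a - (τ n : ℂ) • approxUnit a (τ n) := fun n => by
    rw [approxUnit, Algebra.smul_def]
    linear_combination a * ha.mul_inverse (hτ n)
  have hsmall : Tendsto (fun n => (τ n : ℂ) • approxUnit a (τ n)) atTop (𝓝 0) := by
    simpa using ((Complex.continuous_ofReal.tendsto 0).comp hτ0).smul hu
  refine tendsto_nhds_unique (hu.const_mul a) ?_
  simpa [key] using tendsto_const_nhds.sub hsmall

theorem isUnit_add_one_sub (ha : IsLeftAccretive a) (hu : IsIdempotentElem u) (hau : a * u = a)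
    {K : NNReal} (hK : ∀ t : ℝ, 0 < t → ‖u * Ring.inverse (algebraMap ℂ R t + a)‖ ≤ K) :
    IsUnit (a + (1 - u)) := by
  set t : ℝ := (K + 1)⁻¹
  have ht : 0 < t := by positivity
  set W := Ring.inverse (algebraMap ℂ R t + a)
  have hprod : (a + (1 - u)) * (u * W + (1 - u)) = 1 - algebraMap ℂ R t * (u * W) := by
    linear_combination u * ha.mul_inverse ht - hau - (W - 1) * hu.eq
  have hsmall : ‖algebraMap ℂ R t * (u * W)‖ < 1 := by
    rw [← Algebra.smul_def, norm_smul, Complex.norm_real, Real.norm_of_nonneg ht.le]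
    calc t * ‖u * W‖ ≤ t * K := by gcongr; exact hK t ht
      _ < 1 := by rw [inv_mul_lt_iff₀ (by positivity)]; linarith
  have : IsUnit ((a + (1 - u)) * (u * W + (1 - u))) := by
    rw [hprod]; exact (Units.oneSub _ hsmall).isUnit
  exact isUnit_of_mul_isUnit_left this

theorem exists_isIdempotentElem_isUnit_add_one_sub (ha : IsLeftAccretive a) {K : NNReal}
    (hK : ∀ s t : ℝ, 0 < s → 0 < t →
      ‖Ring.inverse (algebraMap ℂ R s + a) * approxUnit a t‖ ≤ K) :
    ∃ u ∈ closure (approxUnit a '' Ioi 0),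
      IsIdempotentElem u ∧ a * u = a ∧ IsUnit (a + (1 - u)) := by
  set τ : ℕ → ℝ := fun n => 1 / (n + 1)
  have hτ : ∀ n, 0 < τ n := fun n => Nat.one_div_pos_of_nat
  have hτ0 : Tendsto τ atTop (𝓝 0) := tendsto_one_div_add_atTop_nhds_zero_nat
  obtain ⟨u, hu⟩ := cauchySeq_tendsto_of_complete <|
    (ha.lipschitzOnWith_approxUnit hK).cauchySeq_comp hτ0.cauchySeq (range_subset_iff.2 hτ)
  have hau : a * u = a := ha.mul_eq_of_tendsto_approxUnit hτ hτ0 hu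
  have hidem : IsIdempotentElem u := isIdempotentElem_of_tendsto_approxUnit hau hu
  refine ⟨u, mem_closure_of_tendsto hu (.of_forall fun n => mem_image_of_mem _ (hτ n)), hidem,
    hau, ha.isUnit_add_one_sub hidem hau (K := K) fun t ht => ?_⟩
  refine le_of_tendsto' (hu.mul_const _).norm fun n => ?_
  rw [mul_comm]
  exact hK t (τ n) ht (hτ n)

end IsLeftAccretive

end CommBanachAlgebra

section Accretive

variable {A : Type*} [NormedRing A] [NormedAlgebra ℂ A]

def IsAccretive (x : A) : Prop :=
  ∀ φ : StrongDual ℂ A, ‖φ‖ = 1 → φ 1 = 1 → 0 ≤ (φ x).re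

noncomputable instance (x : A) : NormedCommRing (Algebra.elemental ℂ x) where
  mul_comm := mul_comm

def toElemental (x : A) : Algebra.elemental ℂ x :=
  ⟨x, Algebra.elemental.self_mem ℂ x⟩

variable {x : A}

theorem approxUnit_toElemental_mem (t : ℝ) :
    (↑(approxUnit (toElemental x) t) : A) ∈ NonUnitalAlgebra.elemental ℂ x := by
  rw [approxUnit, mul_comm]
  exact mul_mem_nonUnitalElemental (Subtype.property _) (NonUnitalAlgebra.elemental.self_mem ℂ x)

variable [NormOneClass A]

instance (x : A) : NormOneClass (Algebra.elemental ℂ x) :=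
  SubringClass.toNormOneClass _

namespace IsAccretive

theorem re_apply_mul_nonneg (hx : IsAccretive x) {w : A} {ψ : StrongDual ℂ A}
    (hψ : ‖ψ‖ ≤ 1) (hψw : ψ w = ‖w‖) : 0 ≤ (ψ (x * w)).re := by
  rcases eq_or_ne w 0 with rfl | hw
  · simp
  have hw' : 0 < ‖w‖ := norm_pos_iff.mpr hw
  set φ : StrongDual ℂ A := (‖w‖⁻¹ : ℂ) • ψ.comp ((ContinuousLinearMap.mul ℂ A).flip w)
  have hφ : ∀ c, φ c = (‖w‖⁻¹ : ℂ) * ψ (c * w) := fun c => rfl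
  have hφ1 : φ 1 = 1 := by
    rw [hφ, one_mul, hψw, ← Complex.ofReal_inv, ← Complex.ofReal_mul, inv_mul_cancel₀ hw'.ne',
      Complex.ofReal_one]
  have hφnorm : ‖φ‖ = 1 := by
    refine le_antisymm (φ.opNorm_le_bound zero_le_one fun c => ?_) ?_
    · rw [hφ, norm_mul, ← Complex.ofReal_inv, Complex.norm_real, Real.norm_of_nonneg
        (inv_nonneg.mpr hw'.le), one_mul, inv_mul_le_iff₀ hw', mul_comm]
      exact (ψ.le_of_opNorm_le hψ _).trans (by rw [one_mul]; exact norm_mul_le _ _)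
    · simpa [hφ1] using φ.le_opNorm 1
  have h := hx φ hφnorm hφ1
  rw [hφ, ← Complex.ofReal_inv, Complex.re_ofReal_mul] at h
  exact nonneg_of_mul_nonneg_right h (inv_pos.mpr hw')

theorem isLeftAccretive (hx : IsAccretive x) : IsLeftAccretive x := by
  intro t ht w
  obtain ⟨ψ, hψ, hψw⟩ := exists_dual_vector'' ℂ w
  calc t * ‖w‖ ≤ t * ‖w‖ + (ψ (x * w)).re := le_add_of_nonneg_right (hx.re_apply_mul_nonneg hψ hψw)
    _ = (ψ ((algebraMap ℂ A t + x) * w)).re := by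
      simp [add_mul, ← Algebra.smul_def, hψw]
    _ ≤ ‖(algebraMap ℂ A t + x) * w‖ := (Complex.re_le_norm _).trans
      (by simpa using ψ.le_of_opNorm_le hψ ((algebraMap ℂ A t + x) * w))

theorem isLeftAccretive_toElemental (hx : IsAccretive x) : IsLeftAccretive (toElemental x) :=
  fun t ht w => hx.isLeftAccretive t ht w

variable [CompleteSpace A]

theorem exists_bound_of_isClosed_left (hx : IsAccretive x)
    (hcl : IsClosed {w : A | ∃ a : A, w = x * a}) :
    ∃ K : NNReal, ∀ s t : ℝ, 0 < s → 0 < t →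
      ‖Ring.inverse (algebraMap ℂ (Algebra.elemental ℂ x) s + toElemental x) *
        approxUnit (toElemental x) t‖ ≤ K := by
  have hrange : range (ContinuousLinearMap.mul ℂ A x) = {w : A | ∃ a : A, w = x * a} := by
    ext; simp [eq_comm]
  obtain ⟨C, hC, hpre⟩ :=
    (ContinuousLinearMap.mul ℂ A x).exists_preimage_norm_le_of_isClosed_range (hrange ▸ hcl)
  have ha := hx.isLeftAccretive_toElemental
  refine ⟨⟨4 * C, by positivity⟩, fun s t hs ht => ?_⟩
  set W := Ring.inverse (algebraMap ℂ (Algebra.elemental ℂ x) s + toElemental x)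
  obtain ⟨c, hc, hcn⟩ := hpre ↑(approxUnit (toElemental x) t) ⟨_, rfl⟩
  rw [ContinuousLinearMap.mul_apply'] at hc
  have hfac : ((W * approxUnit (toElemental x) t : Algebra.elemental ℂ x) : A) =
      ↑(approxUnit (toElemental x) s) * c := by
    calc ((W * approxUnit (toElemental x) t : Algebra.elemental ℂ x) : A)
        = W * (x * c) := by rw [hc]; rfl
      _ = ((W * toElemental x : Algebra.elemental ℂ x) : A) * c := by rw [← mul_assoc]; rfl
      _ = ↑(approxUnit (toElemental x) s) * c := by rw [mul_comm W]; rfl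
  calc ‖W * approxUnit (toElemental x) t‖ = ‖(↑(approxUnit (toElemental x) s) : A) * c‖ :=
        congrArg norm hfac
    _ ≤ ‖approxUnit (toElemental x) s‖ * ‖c‖ := norm_mul_le _ _
    _ ≤ 2 * (C * 2) := by
      gcongr
      · exact ha.norm_approxUnit_le hs
      · exact hcn.trans (by gcongr; exact ha.norm_approxUnit_le ht)
    _ = 4 * C := by ring

theorem exists_bound_of_isClosed_right (hx : IsAccretive x)
    (hcl : IsClosed {w : A | ∃ a : A, w = a * x}) :
    ∃ K : NNReal, ∀ s t : ℝ, 0 < s → 0 < t →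
      ‖Ring.inverse (algebraMap ℂ (Algebra.elemental ℂ x) s + toElemental x) *
        approxUnit (toElemental x) t‖ ≤ K := by
  have hrange : range ((ContinuousLinearMap.mul ℂ A).flip x) = {w : A | ∃ a : A, w = a * x} := by
    ext; simp [eq_comm]
  obtain ⟨C, hC, hpre⟩ :=
    ((ContinuousLinearMap.mul ℂ A).flip x).exists_preimage_norm_le_of_isClosed_range
      (hrange ▸ hcl)
  have ha := hx.isLeftAccretive_toElemental
  refine ⟨⟨4 * C, by positivity⟩, fun s t hs ht => ?_⟩
  set W := Ring.inverse (algebraMap ℂ (Algebra.elemental ℂ x) s + toElemental x)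
  obtain ⟨c, hc, hcn⟩ := hpre ↑(approxUnit (toElemental x) t)
    ⟨↑(Ring.inverse (algebraMap ℂ (Algebra.elemental ℂ x) t + toElemental x)),
      by rw [approxUnit, mul_comm]; rfl⟩
  rw [ContinuousLinearMap.flip_apply, ContinuousLinearMap.mul_apply'] at hc
  have hfac : ((W * approxUnit (toElemental x) t : Algebra.elemental ℂ x) : A) =
      c * ↑(approxUnit (toElemental x) s) := by
    calc ((W * approxUnit (toElemental x) t : Algebra.elemental ℂ x) : A)
        = (c * x) * W := by rw [mul_comm, hc]; rfl
      _ = c * ↑(approxUnit (toElemental x) s) := by rw [mul_assoc]; rfl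
  calc ‖W * approxUnit (toElemental x) t‖ = ‖c * (↑(approxUnit (toElemental x) s) : A)‖ :=
        congrArg norm hfac
    _ ≤ ‖c‖ * ‖approxUnit (toElemental x) s‖ := norm_mul_le _ _
    _ ≤ (C * 2) * 2 := by
      gcongr
      · exact hcn.trans (by gcongr; exact ha.norm_approxUnit_le ht)
      · exact ha.norm_approxUnit_le hs
    _ = 4 * C := by ring

theorem exists_isIdempotentElem (hx : IsAccretive x) {K : NNReal}
    (hK : ∀ s t : ℝ, 0 < s → 0 < t →
      ‖Ring.inverse (algebraMap ℂ (Algebra.elemental ℂ x) s + toElemental x) *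
        approxUnit (toElemental x) t‖ ≤ K) :
    ∃ u : Algebra.elemental ℂ x,
      (∀ S : Set A, IsClosed S → (∀ t, (↑(approxUnit (toElemental x) t) : A) ∈ S) → (u : A) ∈ S) ∧
      IsIdempotentElem u ∧ toElemental x * u = toElemental x ∧
      IsUnit (toElemental x + (1 - u)) := by
  obtain ⟨u, hu, hidem, hxu, hunit⟩ :=
    hx.isLeftAccretive_toElemental.exists_isIdempotentElem_isUnit_add_one_sub hK
  refine ⟨u, fun S hS hsub => hS.closure_subset ?_, hidem, hxu, hunit⟩
  exact map_mem_closure continuous_subtype_val hu (by rintro _ ⟨t, -, rfl⟩; exact hsub t)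

theorem exists_mul_mul_eq_self_of_isClosed_left (hx : IsAccretive x)
    (hcl : IsClosed {w : A | ∃ a : A, w = x * a}) : ∃ y : A, x * y * x = x := by
  obtain ⟨K, hK⟩ := hx.exists_bound_of_isClosed_left hcl
  obtain ⟨u, hmem, -, hxu, -⟩ := hx.exists_isIdempotentElem hK
  obtain ⟨y, hy⟩ := hmem _ hcl fun t => ⟨_, rfl⟩
  refine ⟨y, ?_⟩
  rw [← hy]
  exact congrArg Subtype.val ((mul_comm _ _).trans hxu)

theorem exists_mul_mul_eq_self_of_isClosed_right (hx : IsAccretive x)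
    (hcl : IsClosed {w : A | ∃ a : A, w = a * x}) : ∃ y : A, x * y * x = x := by
  obtain ⟨K, hK⟩ := hx.exists_bound_of_isClosed_right hcl
  obtain ⟨u, hmem, -, hxu, -⟩ := hx.exists_isIdempotentElem hK
  obtain ⟨y, hy⟩ := hmem _ hcl fun t => ⟨_, by rw [approxUnit, mul_comm]; rfl⟩
  refine ⟨y, ?_⟩
  rw [mul_assoc, ← hy]
  exact congrArg Subtype.val hxu

theorem exists_inverse_of_isClosed_left (hx : IsAccretive x)
    (hcl : IsClosed {w : A | ∃ a : A, w = x * a}) :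
    ∃ u y : A, u ∈ NonUnitalAlgebra.elemental ℂ x ∧ y ∈ NonUnitalAlgebra.elemental ℂ x ∧
      (∀ b ∈ NonUnitalAlgebra.elemental ℂ x, u * b = b ∧ b * u = b) ∧
      x * y = u ∧ y * x = u := by
  obtain ⟨K, hK⟩ := hx.exists_bound_of_isClosed_left hcl
  obtain ⟨u, hmem, hidem, hxu, hunit⟩ := hx.exists_isIdempotentElem hK
  obtain ⟨v, hv⟩ := hunit.exists_right_inv
  have huB : (u : A) ∈ NonUnitalAlgebra.elemental ℂ x :=
    hmem _ (NonUnitalAlgebra.elemental.isClosed ℂ x) approxUnit_toElemental_mem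
  have hux : (u : A) * x = x := congrArg Subtype.val ((mul_comm _ _).trans hxu)
  have hxy : toElemental x * (u * v) = u := mul_mul_eq_of_add_one_sub_mul_eq_one hidem hv
  refine ⟨u, ↑(u * v), huB, ?_, fun b hb => ?_, congrArg Subtype.val hxy,
    congrArg Subtype.val ((mul_comm _ _).trans hxy)⟩
  · rw [mul_comm]
    exact mul_mem_nonUnitalElemental v.2 huB
  · have hub : (u : A) * b = b := mul_eq_self_of_mem_nonUnitalElemental hux hb
    refine ⟨hub, Eq.trans ?_ hub⟩
    exact congrArg Subtype.val
      (mul_comm (⟨b, nonUnitalElemental_le_elemental hb⟩ : Algebra.elemental ℂ x) u)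

theorem exists_forall_le_norm_of_isClosed_left (hx : IsAccretive x)
    (hcl : IsClosed {w : A | ∃ a : A, w = x * a}) :
    ∃ ε > 0, ∀ z ∈ spectrum ℂ x, z ≠ 0 → ε ≤ ‖z‖ := by
  obtain ⟨K, hK⟩ := hx.exists_bound_of_isClosed_left hcl
  obtain ⟨u, -, hidem, hxu, hunit⟩ := hx.exists_isIdempotentElem hK
  obtain ⟨ε, hε, h⟩ := exists_forall_le_norm_of_isUnit_add_one_sub hidem hxu hunit
  exact ⟨ε, hε, fun z hz => h z (spectrum.subset_subalgebra (toElemental x) hz)⟩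

end IsAccretive

end Accretive

/-- Let `A` be a unital Banach algebra and `x ∈ A` accretive.  The
following are equivalent: (i) `xA` is norm closed; (ii) `Ax` is norm closed; (iii) `x` is
pseudo-invertible in `A` (there is `y` with `xyx = x`); (iv) `x` is invertible in the
closed subalgebra generated by `x`.  Moreover these imply that `0` is isolated in, or
absent from, the spectrum of `x`. -/
theorem accretive_range_closed_tfae
    {A : Type*} [NormedRing A] [NormedAlgebra ℂ A] [NormOneClass A] [CompleteSpace A]
    (x : A)
    (hacc : ∀ φ : StrongDual ℂ A, ‖φ‖ = 1 → φ 1 = 1 → 0 ≤ (φ x).re) :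
    ([IsClosed {w : A | ∃ a : A, w = x * a},
      IsClosed {w : A | ∃ a : A, w = a * x},
      (∃ y : A, x * y * x = x),
      (∃ u y : A,
        u ∈ closure ((NonUnitalAlgebra.adjoin ℂ {x} : NonUnitalSubalgebra ℂ A) : Set A) ∧
        y ∈ closure ((NonUnitalAlgebra.adjoin ℂ {x} : NonUnitalSubalgebra ℂ A) : Set A) ∧
        (∀ b ∈ closure ((NonUnitalAlgebra.adjoin ℂ {x} : NonUnitalSubalgebra ℂ A) : Set A),
          u * b = b ∧ b * u = b) ∧
        x * y = u ∧ y * x = u)].TFAE) ∧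
    ((∃ y : A, x * y * x = x) →
      ((0 : ℂ) ∉ spectrum ℂ x ∨
        ∃ ε > (0 : ℝ), ∀ z ∈ spectrum ℂ x, z ≠ 0 → ε ≤ ‖z‖)) := by
  have hx : IsAccretive x := hacc
  refine ⟨?_, fun ⟨y, hy⟩ => Or.inr <|
    hx.exists_forall_le_norm_of_isClosed_left (isClosed_setOf_exists_eq_mul_left_of_mul_mul_eq hy)⟩
  tfae_have 1 → 3 := hx.exists_mul_mul_eq_self_of_isClosed_left
  tfae_have 2 → 3 := hx.exists_mul_mul_eq_self_of_isClosed_right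
  tfae_have 3 → 1 := fun ⟨_, hy⟩ => isClosed_setOf_exists_eq_mul_left_of_mul_mul_eq hy
  tfae_have 3 → 2 := fun ⟨_, hy⟩ => isClosed_setOf_exists_eq_mul_right_of_mul_mul_eq hy
  tfae_have 1 → 4 := hx.exists_inverse_of_isClosed_left
  tfae_have 4 → 3 := fun ⟨u, y, _, _, hu, hxy, _⟩ =>
    ⟨y, by rw [hxy]; exact (hu x (NonUnitalAlgebra.elemental.self_mem ℂ x)).1⟩
  tfae_finish
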